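/- Any equilibrium (r₁, r₂, θ) with r₁, r₂ ∈ (0,1) of the co-rotating vortex dipole system satisfies θ = π (mod 2π); the alternative θ = 0 leads to the contradiction that Ω(r₁) + Ω(r₂) = (Φ/(2r₁₂²))·(2 - r₂/r₁ - r₁/r₂) with left side positive and right side equal to -(Φ/(2r₁₂²))·(r₁-r₂)²/(r₁r₂) ≤ 0. -/
import Mathlib


/-- any equilibrium `(r₁, r₂, θ)` with `r₁, r₂ ∈ (0,1)` of the
co-rotating vortex dipole system satisfies `θ = π (mod 2π)`. -/
theorem corotating_equilibrium_theta_pi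
    (Ω₀ Φ ω : ℝ) (hΩ₀ : 0 < Ω₀) (hΦ : 0 < Φ)
    (r₁ r₂ θ₁ θ₂ : ℝ)
    (hr₁ : 0 < r₁) (hr₁' : r₁ < 1) (hr₂ : 0 < r₂) (hr₂' : r₂ < 1)
    (r₁₂sq : ℝ)
    (hr₁₂sq : r₁₂sq = r₁ ^ 2 + r₂ ^ 2 - 2 * r₁ * r₂ * Real.cos (θ₁ - θ₂))
    (hpos : 0 < r₁₂sq)
    -- the four right-hand sides of the co-rotating polar equations vanish:
    (heq1 : -ω + Ω₀ / (1 - r₁ ^ 2)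
      - (Φ / (2 * r₁₂sq)) * (1 - (r₂ / r₁) * Real.cos (θ₁ - θ₂)) = 0)
    (heq2 : -ω - Ω₀ / (1 - r₂ ^ 2)
      + (Φ / (2 * r₁₂sq)) * (1 - (r₁ / r₂) * Real.cos (θ₁ - θ₂)) = 0)
    (heq3 : (Φ * r₂ / (2 * r₁₂sq)) * Real.sin (θ₁ - θ₂) = 0)
    (heq4 : (Φ * r₁ / (2 * r₁₂sq)) * Real.sin (θ₁ - θ₂) = 0) :
    ∃ k : ℤ, θ₁ - θ₂ = Real.pi + 2 * Real.pi * k := by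
  have hsin : Real.sin (θ₁ - θ₂) = 0 := by
    have h : Φ * r₂ / (2 * r₁₂sq) ≠ 0 := by positivity
    exact (mul_eq_zero.1 heq3).resolve_left h
  obtain ⟨n, hn⟩ := Real.sin_eq_zero_iff.1 hsin
  rcases Int.even_or_odd n with ⟨m, hm⟩ | ⟨m, hm⟩
  · -- cos = 1, contradiction
    exfalso
    have hcos : Real.cos (θ₁ - θ₂) = 1 := by
      rw [← hn, hm]
      push_cast
      rw [show ((m : ℝ) + m) * Real.pi = 2 * Real.pi * m by ring]
      rw [mul_comm]; exact Real.cos_int_mul_two_pi m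
    rw [hcos] at heq1 heq2 hr₁₂sq
    have hr12 : r₁₂sq = (r₁ - r₂) ^ 2 := by rw [hr₁₂sq]; ring
    have hne : r₁ ≠ r₂ := by
      intro h; rw [h] at hr12; simp at hr12; linarith
    have h1 : 0 < 1 - r₁ ^ 2 := by nlinarith
    have h2 : 0 < 1 - r₂ ^ 2 := by nlinarith
    -- sum heq1 - heq2:
    have hsum : Ω₀ / (1 - r₁ ^ 2) + Ω₀ / (1 - r₂ ^ 2)
        = (Φ / (2 * r₁₂sq)) * ((1 - r₂ / r₁) + (1 - r₁ / r₂)) := by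
      linarith [heq1, heq2]
    have hL : 0 < Ω₀ / (1 - r₁ ^ 2) + Ω₀ / (1 - r₂ ^ 2) := by positivity
    have hR : (Φ / (2 * r₁₂sq)) * ((1 - r₂ / r₁) + (1 - r₁ / r₂)) ≤ 0 := by
      apply mul_nonpos_of_nonneg_of_nonpos
      · positivity
      · have : (1 - r₂ / r₁) + (1 - r₁ / r₂) = -((r₁ - r₂) ^ 2 / (r₁ * r₂)) := by
          field_simp; ring
        rw [this]
        have : 0 ≤ (r₁ - r₂) ^ 2 / (r₁ * r₂) := by positivity
        linarith
    linarith
  · -- n odd: θ = (2m+1)π = π + 2π*m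
    exact ⟨m, by rw [← hn, hm]; push_cast; ring⟩
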